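/- arXiv:0708.2758 — 8 statements merged into one kernel-verified Lean document; each statement's English description precedes it below -/
import Mathlib

section
/- Let T be a group and t : T → T an automorphism with t² = id. Let X = {x ∈ T | t(x) = x⁻¹} and Tᵗ = {s ∈ T | t(s) = s}. If the squaring map is bijective on X, then every g ∈ T can be written as g = s·x with s ∈ Tᵗ and x ∈ X, and this factorization is unique. -/
/-!
If `g = s * x` with `t s = s` and `t x = x⁻¹`, then `(t g)⁻¹ * g = x * s⁻¹ * s * x = x ^ 2`.
So the factor `x` must be a square root in `X` of `(t g)⁻¹ * g`, which lies in `X` because `t`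
is an involution; bijectivity of squaring on `X` makes this root exist and be unique, and then
`s = g * x⁻¹` is forced and turns out to be `t`-fixed.
-/

section TwistedFactorization

variable {T F : Type*} [Group T] [FunLike F T T] [MonoidHomClass F T T] {t : F}

theorem map_inv_mul_mem_of_involutive (ht : Function.Involutive t) (g : T) :
    (t g)⁻¹ * g ∈ {x : T | t x = x⁻¹} := by
  simp [ht g]

theorem map_mul_inv_mul_eq_sq {s x : T} (hs : t s = s) (hx : t x = x⁻¹) :
    (t (s * x))⁻¹ * (s * x) = x ^ 2 := by
  rw [map_mul, hs, hx, sq]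
  group

theorem map_mul_inv_eq_of_sq_eq {g x : T} (hx : t x = x⁻¹) (hsq : x ^ 2 = (t g)⁻¹ * g) :
    t (g * x⁻¹) = g * x⁻¹ := by
  rw [map_mul, map_inv, hx, inv_inv, eq_mul_inv_iff_mul_eq, mul_assoc, ← sq, hsq,
    mul_inv_cancel_left]

end TwistedFactorization

theorem twisted_unique_factorization {T : Type*} [Group T] (t : T ≃* T)
    (ht : ∀ x : T, t (t x) = x)
    (hsq : Set.BijOn (fun x => x ^ 2) {x : T | t x = x⁻¹} {x : T | t x = x⁻¹}) :
    ∀ g : T, ∃! p : T × T, t p.1 = p.1 ∧ t p.2 = p.2⁻¹ ∧ g = p.1 * p.2 := by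
  intro g
  obtain ⟨x, hx, hx_sq⟩ := hsq.surjOn (map_inv_mul_mem_of_involutive ht g)
  refine ⟨(g * x⁻¹, x), ⟨map_mul_inv_eq_of_sq_eq hx hx_sq, hx, by group⟩, ?_⟩
  rintro ⟨s, y⟩ ⟨hs, hy, rfl⟩
  have hyx : y = x := hsq.injOn hy hx (hx_sq.trans (map_mul_inv_mul_eq_sq hs hy)).symm
  subst hyx
  simp
end

section
/- Let T be a group with involutive automorphism t, X = {x | t(x) = x⁻¹}, Tᵗ the fixed subgroup, and suppose squaring is bijective on X. Define, for x,y ∈ X, elements s(x,y) ∈ Tᵗ and x∘y ∈ X by the unique factorization xy = s(x,y)·(x∘y). Then (x∘y)² = y x² y. -/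
/-! Applying `t` to `x * y = s * z` gives `x⁻¹ * y⁻¹ = s * z⁻¹`. Solving the two equations for `z`
gives `z = s⁻¹ * x * y` and `z = y * x * s`, so `z ^ 2 = (y * x * s) * (s⁻¹ * x * y) = y * x ^ 2 * y`. -/

theorem sq_eq_mul_sq_mul_of_mul_eq_of_inv_mul_inv_eq {G : Type*} [Group G] {x y s z : G}
    (h : x * y = s * z) (h' : x⁻¹ * y⁻¹ = s * z⁻¹) : z ^ 2 = y * x ^ 2 * y := by
  have hz_left : z = s⁻¹ * (x * y) := by rw [h, inv_mul_cancel_left]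
  have hz_right : z = y * x * s := by
    rw [← inv_inv z, ← inv_mul_cancel_left s z⁻¹, ← h']
    group
  calc z ^ 2 = (y * x * s) * (s⁻¹ * (x * y)) := by rw [sq]; nth_rw 1 [hz_right]; rw [← hz_left]
    _ = y * x ^ 2 * y := by simp only [sq, mul_assoc, mul_inv_cancel_left]

theorem twisted_circ_square_general {T : Type*} [Group T] (t : T ≃* T)
    (x y s z : T) (hx : t x = x⁻¹) (hy : t y = y⁻¹) (hs : t s = s) (hz : t z = z⁻¹)
    (hfact : x * y = s * z) :
    z ^ 2 = y * x ^ 2 * y := by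
  have htfact : x⁻¹ * y⁻¹ = s * z⁻¹ := by
    simpa only [map_mul, hx, hy, hs, hz] using congrArg t hfact
  exact sq_eq_mul_sq_mul_of_mul_eq_of_inv_mul_inv_eq hfact htfact

theorem twisted_circ_square {T : Type*} [Group T] (t : T ≃* T)
    (ht : ∀ x : T, t (t x) = x)
    (hsq : Set.BijOn (fun x => x ^ 2) {x : T | t x = x⁻¹} {x : T | t x = x⁻¹})
    (x y s z : T) (hx : t x = x⁻¹) (hy : t y = y⁻¹) (hs : t s = s) (hz : t z = z⁻¹)
    (hfact : x * y = s * z) :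
    z ^ 2 = y * x ^ 2 * y :=
  twisted_circ_square_general t x y s z hx hy hs hz hfact
end

section
/- Under the assumption that squaring is bijective on X = {x ∈ T | t(x) = x⁻¹} (t an involutive automorphism of the group T), the set X coincides with the orbit {t(g)⁻¹ g : g ∈ T} of the identity under the twisted action x^g = t(g)⁻¹ x g. -/
section TwistedOrbit

variable {G : Type*} [Group G]

theorem apply_inv_apply_mul_eq_inv {F : Type*} [FunLike F G G] [MonoidHomClass F G G] (t : F)
    (ht : ∀ x : G, t (t x) = x) (g : G) : t ((t g)⁻¹ * g) = ((t g)⁻¹ * g)⁻¹ := by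
  rw [map_mul, map_inv, ht, mul_inv_rev, inv_inv]

theorem inv_apply_mul_self_eq_sq {t : G → G} {y : G} (hy : t y = y⁻¹) : (t y)⁻¹ * y = y ^ 2 := by
  rw [hy, inv_inv, sq]

end TwistedOrbit

theorem inverted_set_eq_orbit {T : Type*} [Group T] (t : T ≃* T)
    (ht : ∀ x : T, t (t x) = x)
    (hsq : Set.BijOn (fun x => x ^ 2) {x : T | t x = x⁻¹} {x : T | t x = x⁻¹}) :
    {x : T | t x = x⁻¹} = Set.range (fun g : T => (t g)⁻¹ * g) := by
  refine Set.Subset.antisymm (fun x hx => ?_) ?_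
  · obtain ⟨y, hy, rfl⟩ := hsq.surjOn hx
    exact ⟨y, inv_apply_mul_self_eq_sq hy⟩
  · rintro _ ⟨g, rfl⟩
    exact apply_inv_apply_mul_eq_inv t ht g
end

section
/- For a finite abelian group A of odd order, the alternation map sending a bimultiplicative form β : A × A → kˣ to Alt(β)(s,t) = β(s,t)β(t,s)⁻¹ is bijective on the set of alternating bimultiplicative forms (i.e. every alternating form is the alternation of a unique alternating bimultiplicative form). -/
/-!
Alternating bimultiplicative forms are skew-symmetric, so the alternation of such a form `β` is
its square `β ^ 2`. Every value of a bimultiplicative form on `A` is killed by `|A| = 2m + 1`, so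
squaring is inverted by raising to the power `m + 1`, and `γ ^ (m + 1)` is the unique square root
of `γ` among alternating bimultiplicative forms.
-/

/-- A form `β : A × A → kˣ` is bimultiplicative if it is a homomorphism in each variable. -/
def IsBimultiplicative {A : Type*} [CommGroup A] {k : Type*} [Field k]
    (β : A → A → kˣ) : Prop :=
  (∀ a b c : A, β (a * b) c = β a c * β b c) ∧ (∀ a b c : A, β a (b * c) = β a b * β a c)

theorem sq_pow_succ_eq_self_of_pow_eq_one {M : Type*} [Monoid M] {x : M} {m : ℕ}
    (hx : x ^ (2 * m + 1) = 1) : (x ^ 2) ^ (m + 1) = x := by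
  rw [← pow_mul, show 2 * (m + 1) = 2 * m + 1 + 1 by ring, pow_succ, hx, one_mul]

namespace IsBimultiplicative

variable {A : Type*} [CommGroup A] {k : Type*} [Field k] {β : A → A → kˣ}

theorem map_one_left (hβ : IsBimultiplicative β) (b : A) : β 1 b = 1 := by
  simpa using hβ.1 1 1 b

theorem map_pow_left (hβ : IsBimultiplicative β) (a b : A) (n : ℕ) :
    β (a ^ n) b = β a b ^ n := by
  induction n with
  | zero => simpa using hβ.map_one_left b
  | succ n ih => rw [pow_succ, pow_succ, hβ.1, ih]

theorem pow_card_eq_one [Finite A] (hβ : IsBimultiplicative β) (a b : A) :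
    β a b ^ Nat.card A = 1 := by
  rw [← hβ.map_pow_left, pow_card_eq_one', hβ.map_one_left]

theorem pow (hβ : IsBimultiplicative β) (n : ℕ) :
    IsBimultiplicative fun s t => β s t ^ n :=
  ⟨fun a b c => by simp only [hβ.1, mul_pow], fun a b c => by simp only [hβ.2, mul_pow]⟩

theorem swap_eq_inv (hβ : IsBimultiplicative β) (hβalt : ∀ a, β a a = 1) (a b : A) :
    β b a = (β a b)⁻¹ := by
  have h := hβalt (a * b)
  rw [hβ.1, hβ.2, hβ.2, hβalt a, hβalt b, one_mul, mul_one] at h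
  exact eq_inv_of_mul_eq_one_right h

theorem mul_inv_swap_eq_sq (hβ : IsBimultiplicative β) (hβalt : ∀ a, β a a = 1) (s t : A) :
    β s t * (β t s)⁻¹ = β s t ^ 2 := by
  rw [hβ.swap_eq_inv hβalt s t, inv_inv, sq]

end IsBimultiplicative

theorem alternation_bijective_of_odd_general {A : Type*} [CommGroup A] [Finite A]
    (hodd : Odd (Nat.card A)) {k : Type*} [Field k]
    (γ : A → A → kˣ) (hγ : IsBimultiplicative (k := k) γ) (hγalt : ∀ a : A, γ a a = 1) :
    ∃! β : {β : A → A → kˣ // IsBimultiplicative (k := k) β ∧ ∀ a : A, β a a = 1},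
      ∀ s t : A, β.1 s t * (β.1 t s)⁻¹ = γ s t := by
  obtain ⟨m, hm⟩ := hodd
  have sq_pow_succ {β : A → A → kˣ} (hβ : IsBimultiplicative β) (s t : A) :
      (β s t ^ 2) ^ (m + 1) = β s t :=
    sq_pow_succ_eq_self_of_pow_eq_one (hm ▸ hβ.pow_card_eq_one s t)
  have hγalt' : ∀ a, γ a a ^ (m + 1) = 1 := fun a => by rw [hγalt, one_pow]
  refine ⟨⟨fun s t => γ s t ^ (m + 1), hγ.pow (m + 1), hγalt'⟩, fun s t => ?_, ?_⟩
  · rw [(hγ.pow (m + 1)).mul_inv_swap_eq_sq hγalt', pow_right_comm, sq_pow_succ hγ]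
  · rintro ⟨β, hβ, hβalt⟩ hβγ
    ext s t : 3
    change β s t = γ s t ^ (m + 1)
    rw [← sq_pow_succ hβ s t, ← hβ.mul_inv_swap_eq_sq hβalt, hβγ]

theorem alternation_bijective_of_odd {A : Type*} [CommGroup A] [Finite A]
    (hodd : Odd (Nat.card A)) {k : Type*} [Field k] [IsAlgClosed k] [CharZero k]
    (γ : A → A → kˣ) (hγ : IsBimultiplicative (k := k) γ) (hγalt : ∀ a : A, γ a a = 1) :
    ∃! β : {β : A → A → kˣ // IsBimultiplicative (k := k) β ∧ ∀ a : A, β a a = 1},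
      ∀ s t : A, β.1 s t * (β.1 t s)⁻¹ = γ s t :=
  alternation_bijective_of_odd_general hodd γ hγ hγalt
end

section
/- Every alternating bimultiplicative form on a finite abelian group A with values in kˣ is the alternation Alt(β)(s,t) = β(s,t)β(t,s)⁻¹ of some bimultiplicative form β on A. -/
/-!
Decompose `A` as a product of cyclic groups, with projections `π i`, so that
`γ s t = ∏ i j, γ (π i s) (π j t)`. An alternating form vanishes on a cyclic group, so the diagonal
terms `i = j` are trivial, and alternating forms are skew, so the terms with `i > j` are the
inverses of the swapped terms with `i < j`. Hence `γ` is the alternation of its strictly upper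
triangular part `β s t = ∏ i < j, γ (π i s) (π j t)`, which is bimultiplicative.
-/

open Finset

theorem Fintype.prod_eq_prod_lt_mul_prod_lt_swap {ι M : Type*} [Fintype ι] [LinearOrder ι]
    [CommMonoid M] (f : ι × ι → M) (hf : ∀ i, f (i, i) = 1) :
    ∏ p, f p = (∏ p : ι × ι with p.1 < p.2, f p) * ∏ p : ι × ι with p.1 < p.2, f p.swap := by
  rw [← prod_filter_mul_prod_filter_not univ (fun p : ι × ι => p.1 < p.2)]
  congr 1
  have hdiag : ∏ p : ι × ι with ¬p.1 < p.2, f p = ∏ p : ι × ι with p.2 < p.1, f p := by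
    refine (Finset.prod_subset (fun p => by simpa using le_of_lt) ?_).symm
    rintro ⟨i, j⟩ hp hlt
    obtain rfl : i = j := le_antisymm (by simpa using hlt) (by simpa using hp)
    exact hf i
  rw [hdiag]
  exact prod_nbij' Prod.swap Prod.swap (by simp) (by simp) (by simp) (by simp) (by simp)

namespace MonoidHom

variable {A C M : Type*} [CommGroup A] [Group C] [CommGroup M]

theorem apply_swap_eq_inv (γ : A →* A →* M) (hγ : ∀ a, γ a a = 1) (s t : A) :
    γ t s = (γ s t)⁻¹ := by
  have h := hγ (s * t)
  simp only [map_mul, mul_apply, hγ, one_mul, mul_one] at h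
  exact eq_inv_of_mul_eq_one_right (mul_comm (γ t s) _ ▸ h)

theorem eq_one_of_isCyclic [IsCyclic C] (γ : C →* C →* M) (hγ : ∀ a, γ a a = 1) (x y : C) :
    γ x y = 1 := by
  obtain ⟨g, hg⟩ := IsCyclic.exists_generator (α := C)
  obtain ⟨a, rfl⟩ := Subgroup.mem_zpowers_iff.mp (hg x)
  obtain ⟨b, rfl⟩ := Subgroup.mem_zpowers_iff.mp (hg y)
  simp [map_zpow, hγ]

variable {ι : Type*} [Fintype ι]

theorem apply_eq_prod_apply_apply (γ : A →* A →* M) {π : ι → A →* A}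
    (hπ : ∀ s, ∏ i, π i s = s) (s t : A) : γ s t = ∏ p : ι × ι, γ (π p.1 s) (π p.2 t) := by
  conv_lhs => rw [← hπ s, ← hπ t]
  simp only [map_prod, finsetProd_apply, Fintype.prod_prod_type]
  exact prod_comm

variable [LinearOrder ι]

def upperTriangularPart (γ : A →* A →* M) (π : ι → A →* A) : A →* A →* M :=
  ∏ p : ι × ι with p.1 < p.2, (γ.comp (π p.1)).compl₂ (π p.2)

theorem upperTriangularPart_apply (γ : A →* A →* M) (π : ι → A →* A) (s t : A) :
    upperTriangularPart γ π s t = ∏ p : ι × ι with p.1 < p.2, γ (π p.1 s) (π p.2 t) := by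
  simp [upperTriangularPart]

theorem eq_upperTriangularPart_mul_inv (γ : A →* A →* M) (hγ : ∀ a, γ a a = 1)
    {π : ι → A →* A} (hπ : ∀ s, ∏ i, π i s = s) (hdiag : ∀ i s t, γ (π i s) (π i t) = 1)
    (s t : A) :
    γ s t = upperTriangularPart γ π s t * (upperTriangularPart γ π t s)⁻¹ := by
  rw [apply_eq_prod_apply_apply γ hπ, Fintype.prod_eq_prod_lt_mul_prod_lt_swap _ (hdiag · s t),
    upperTriangularPart_apply, upperTriangularPart_apply, ← prod_inv_distrib]
  simp only [Prod.fst_swap, Prod.snd_swap, apply_swap_eq_inv γ hγ (π _ t)]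

end MonoidHom

section

variable {A k : Type*} [CommGroup A] [Field k]

def IsBimultiplicative.toMonoidHom {γ : A → A → kˣ} (hγ : IsBimultiplicative γ) :
    A →* A →* kˣ :=
  MonoidHom.mk' (fun s => MonoidHom.mk' (γ s) (hγ.2 s)) fun a b => MonoidHom.ext (hγ.1 a b)

theorem MonoidHom.isBimultiplicative (β : A →* A →* kˣ) :
    IsBimultiplicative fun s t => β s t :=
  ⟨by simp, by simp⟩

end

theorem alternating_is_alternation_general {A : Type*} [CommGroup A] [Finite A]
    {k : Type*} [Field k]
    (γ : A → A → kˣ) (hγ : IsBimultiplicative (k := k) γ) (hγalt : ∀ a : A, γ a a = 1) :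
    ∃ β : A → A → kˣ, IsBimultiplicative (k := k) β ∧
      ∀ s t : A, γ s t = β s t * (β t s)⁻¹ := by
  obtain ⟨ι, _, n, -, ⟨e⟩⟩ := CommGroup.equiv_prod_multiplicative_zmod_of_finite A
  let : LinearOrder ι := LinearOrder.lift' _ (Fintype.equivFin ι).injective
  let incl i : Multiplicative (ZMod (n i)) →* A :=
    e.symm.toMonoidHom.comp (MonoidHom.mulSingle (fun i => Multiplicative (ZMod (n i))) i)
  let π i : A →* A := (incl i).comp ((Pi.evalMonoidHom _ i).comp e.toMonoidHom)
  have hπ s : ∏ i, π i s = s := by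
    simp [π, incl, ← map_prod, Finset.univ_prod_mulSingle]
  have hdiag i s t : hγ.toMonoidHom (π i s) (π i t) = 1 :=
    ((hγ.toMonoidHom.comp (incl i)).compl₂ (incl i)).eq_one_of_isCyclic (fun _ => hγalt _) _ _
  exact ⟨_, (hγ.toMonoidHom.upperTriangularPart π).isBimultiplicative,
    hγ.toMonoidHom.eq_upperTriangularPart_mul_inv hγalt hπ hdiag⟩

theorem alternating_is_alternation {A : Type*} [CommGroup A] [Finite A]
    {k : Type*} [Field k] [IsAlgClosed k] [CharZero k]
    (γ : A → A → kˣ) (hγ : IsBimultiplicative (k := k) γ) (hγalt : ∀ a : A, γ a a = 1) :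
    ∃ β : A → A → kˣ, IsBimultiplicative (k := k) β ∧
      ∀ s t : A, γ s t = β s t * (β t s)⁻¹ :=
  alternating_is_alternation_general γ hγ hγalt
end

section
/- Let A = ℤ/p² ⊕ ℤ/p² with the alternating form β((a,b),(c,d)) = ε^{ad−bc}, where ε is a primitive p²-th root of unity in k. Then the Lagrangian subgroup B = pA gives a short exact sequence B → A → Hom(B,kˣ) that does not split. -/
/-!
A splitting `s` is additive, and every character of `B = pA` has order dividing `p` because
`pB = 0`; hence `p • s χ = 0`. But `β(x, p y) = ε ^ (p (x₁ y₂ - x₂ y₁)) = 1` whenever `p x = 0`,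
so `χ = β (s χ) ·` would be trivial on `B` for every `χ`, while the character
`(a, b) ↦ ε ^ a` of `B` sends `(p, 0)` to `ε ^ p ≠ 1`.
-/

lemma AddChar.pow_eq_one_of_forall_nsmul_eq_zero {A M : Type*} [AddMonoid A] [CommMonoid M]
    {n : ℕ} (h : ∀ a : A, n • a = 0) (χ : AddChar A M) : χ ^ n = 1 := by
  ext a
  rw [AddChar.pow_apply, ← AddChar.map_nsmul_eq_pow, h, AddChar.map_zero_eq_one,
    AddChar.one_apply]

lemma nsmul_eq_zero_of_map_mul_of_pow_eq_one {M G : Type*} [Monoid M] [AddGroup G] {f : M → G}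
    (hf : ∀ a b, f (a * b) = f a + f b) {a : M} {n : ℕ} (ha : a ^ n = 1) : n • f a = 0 := by
  let φ : Additive M →+ G := AddMonoidHom.mk' (f ∘ Additive.toMul) hf
  calc n • f a = n • φ (Additive.ofMul a) := rfl
    _ = 0 := by rw [← map_nsmul, ← ofMul_pow, ha, ofMul_one, map_zero]

lemma ZMod.nsmul_prod_eq_zero (n : ℕ) (x : ZMod n × ZMod n) : n • x = 0 := by
  ext <;> simp [nsmul_eq_mul]

lemma fst_mul_snd_sub_snd_mul_fst_nsmul_eq_zero {R : Type*} [CommRing R] {n : ℕ} {x : R × R}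
    (hx : n • x = 0) (y : R × R) : x.1 * (n • y).2 - x.2 * (n • y).1 = 0 := by
  have h₁ : (n : R) * x.1 = 0 := by simpa [nsmul_eq_mul] using congrArg Prod.fst hx
  have h₂ : (n : R) * x.2 = 0 := by simpa [nsmul_eq_mul] using congrArg Prod.snd hx
  rw [Prod.smul_fst, Prod.smul_snd, nsmul_eq_mul, nsmul_eq_mul]
  linear_combination y.2 * h₁ - y.1 * h₂

lemma AddChar.exists_apply_ne_one_of_fst_ne_zero {M G : Type*} [CommMonoid M] [AddGroup G]
    {n : ℕ} [NeZero n] {ζ : M} (hζ : orderOf ζ = n) (B : AddSubgroup (ZMod n × G)) (b : B)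
    (hb : (b : ZMod n × G).1 ≠ 0) : ∃ χ : AddChar B M, χ b ≠ 1 := by
  have hζn : ζ ^ n = 1 := by rw [← hζ]; exact pow_orderOf_eq_one ζ
  refine ⟨(AddChar.zmodChar n hζn).compAddMonoidHom ((AddMonoidHom.fst _ _).comp B.subtype), ?_⟩
  rw [AddChar.compAddMonoidHom_apply, AddChar.zmodChar_apply]
  exact pow_ne_one_of_lt_orderOf ((ZMod.val_ne_zero _).2 hb) (by rw [hζ]; exact ZMod.val_lt _)

lemma ZMod.natCast_ne_zero_of_one_lt {p : ℕ} (hp : 1 < p) : (p : ZMod (p ^ 2)) ≠ 0 := by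
  rw [Ne, ZMod.natCast_eq_zero_iff]
  exact fun h => absurd (Nat.le_of_dvd (by omega) h) (by nlinarith)

theorem lagrangian_extension_nonsplit_general {k : Type*} [Field k]
    (p : ℕ) (hp : p.Prime) (ε : kˣ) (hε : orderOf ε = p ^ 2)
    (β : (ZMod (p ^ 2) × ZMod (p ^ 2)) → (ZMod (p ^ 2) × ZMod (p ^ 2)) → kˣ)
    (hβ : ∀ x y : ZMod (p ^ 2) × ZMod (p ^ 2),
      β x y = ε ^ (x.1 * y.2 - x.2 * y.1).val)
    (B : AddSubgroup (ZMod (p ^ 2) × ZMod (p ^ 2)))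
    (hB : ∀ x : ZMod (p ^ 2) × ZMod (p ^ 2), x ∈ B ↔ ∃ y, p • y = x) :
    ¬ ∃ s : AddChar B kˣ → ZMod (p ^ 2) × ZMod (p ^ 2),
        (∀ χ ψ : AddChar B kˣ, s (χ * ψ) = s χ + s ψ) ∧
        (∀ (χ : AddChar B kˣ) (b : B), β (s χ) (b : ZMod (p ^ 2) × ZMod (p ^ 2)) = χ b) := by
  have : NeZero (p ^ 2) := ⟨pow_ne_zero 2 hp.ne_zero⟩
  rintro ⟨s, hs_mul, hs_pair⟩
  have hpB : ∀ b : B, p • b = 0 := by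
    rintro ⟨_, hb⟩
    obtain ⟨y, rfl⟩ := (hB _).1 hb
    refine Subtype.ext ?_
    change p • p • y = 0
    rw [smul_smul, ← pow_two]
    exact ZMod.nsmul_prod_eq_zero _ y
  have hps (χ : AddChar B kˣ) : p • s χ = 0 :=
    nsmul_eq_zero_of_map_mul_of_pow_eq_one hs_mul (χ.pow_eq_one_of_forall_nsmul_eq_zero hpB)
  have htriv (χ : AddChar B kˣ) (b : B) : χ b = 1 := by
    obtain ⟨y, hy⟩ := (hB _).1 b.2
    rw [← hs_pair, hβ, ← hy, fst_mul_snd_sub_snd_mul_fst_nsmul_eq_zero (hps χ), ZMod.val_zero,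
      pow_zero]
  have hp0 : ((p : ZMod (p ^ 2)), (0 : ZMod (p ^ 2))) ∈ B := (hB _).2 ⟨(1, 0), by simp⟩
  obtain ⟨χ, hχ⟩ := AddChar.exists_apply_ne_one_of_fst_ne_zero hε B ⟨_, hp0⟩
    (ZMod.natCast_ne_zero_of_one_lt hp.one_lt)
  exact hχ (htriv χ _)

set_option maxHeartbeats 1600000 in
theorem lagrangian_extension_nonsplit {k : Type*} [Field k] [IsAlgClosed k] [CharZero k]
    (p : ℕ) (hp : p.Prime) (ε : kˣ) (hε : orderOf ε = p ^ 2)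
    (β : (ZMod (p ^ 2) × ZMod (p ^ 2)) → (ZMod (p ^ 2) × ZMod (p ^ 2)) → kˣ)
    (hβ : ∀ x y : ZMod (p ^ 2) × ZMod (p ^ 2),
      β x y = ε ^ (x.1 * y.2 - x.2 * y.1).val)
    (B : AddSubgroup (ZMod (p ^ 2) × ZMod (p ^ 2)))
    (hB : ∀ x : ZMod (p ^ 2) × ZMod (p ^ 2), x ∈ B ↔ ∃ y, p • y = x) :
    ¬ ∃ s : AddChar B kˣ → ZMod (p ^ 2) × ZMod (p ^ 2),
        (∀ χ ψ : AddChar B kˣ, s (χ * ψ) = s χ + s ψ) ∧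
        (∀ (χ : AddChar B kˣ) (b : B), β (s χ) (b : ZMod (p ^ 2) × ZMod (p ^ 2)) = χ b) :=
  lagrangian_extension_nonsplit_general p hp ε hε β hβ B hB
end

section
/- Let C : V × V × V → 𝔽₃ be a symmetric trilinear form on a finite-dimensional 𝔽₃-vector space V satisfying C(v,v,v) = 0 for all v, and let c : V → 𝔽₃ be a cubic form with c(u+v) − c(u) − c(v) = C(u,u,v) + C(u,v,v). Then for any linear g : V → V preserving C, the map ψ(g)(v) = c(v) − c(g(v)) is 𝔽₃-linear in v. -/
/-!
The polarisation `c (u + v) - c u - c v = C u u v + C u v v` of `c` is `g`-invariant because `C`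
is, so it cancels from the polarisation of `v ↦ c v - c (g v)`. Hence this map is additive, and
additive maps between `ZMod n`-modules are linear.
-/

theorem sub_comp_add_of_polarization_invariant {V W : Type*} [AddCommGroup V] [AddCommGroup W]
    {c : V → W} {B : V → V → W} (hc : ∀ u v, c (u + v) - c u - c v = B u v)
    {g : V →+ V} (hgB : ∀ u v, B (g u) (g v) = B u v) (u v : V) :
    c (u + v) - c (g (u + v)) = (c u - c (g u)) + (c v - c (g v)) := by
  have hgc := hc (g u) (g v)
  rw [hgB, ← map_add, ← hc u v] at hgc
  linear_combination (norm := abel) -hgc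

theorem isLinearMap_zmod_of_map_add {n : ℕ} {M M₁ : Type*} [AddCommGroup M] [Module (ZMod n) M]
    [AddCommGroup M₁] [Module (ZMod n) M₁] {f : M → M₁} (hf : ∀ x y, f (x + y) = f x + f y) :
    IsLinearMap (ZMod n) f :=
  ((AddMonoidHom.mk' f hf).toZModLinearMap n).isLinear

theorem cubic_cocycle_linear_general {V : Type*} [AddCommGroup V]
    [Module (ZMod 3) V]
    (C : V →ₗ[ZMod 3] V →ₗ[ZMod 3] V →ₗ[ZMod 3] ZMod 3)
    (c : V → ZMod 3) (hc : ∀ u v : V, c (u + v) - c u - c v = C u u v + C u v v)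
    (g : V →ₗ[ZMod 3] V)
    (hgC : ∀ u v w : V, C (g u) (g v) (g w) = C u v w) :
    IsLinearMap (ZMod 3) (fun v : V => c v - c (g v)) :=
  isLinearMap_zmod_of_map_add <|
    sub_comp_add_of_polarization_invariant (g := g.toAddMonoidHom) hc fun u v => by
      simp only [LinearMap.toAddMonoidHom_coe, hgC]

theorem cubic_cocycle_linear {V : Type*} [AddCommGroup V]
    [Module (ZMod 3) V] [FiniteDimensional (ZMod 3) V]
    (C : V →ₗ[ZMod 3] V →ₗ[ZMod 3] V →ₗ[ZMod 3] ZMod 3)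
    (hsym1 : ∀ u v w : V, C u v w = C v u w)
    (hsym2 : ∀ u v w : V, C u v w = C u w v)
    (hzero : ∀ v : V, C v v v = 0)
    (c : V → ZMod 3) (hc : ∀ u v : V, c (u + v) - c u - c v = C u u v + C u v v)
    (g : V →ₗ[ZMod 3] V) (hg : Function.Bijective g)
    (hgC : ∀ u v w : V, C (g u) (g v) (g w) = C u v w) :
    IsLinearMap (ZMod 3) (fun v : V => c v - c (g v)) :=
  cubic_cocycle_linear_general C c hc g hgC
end

section
/- Let A₁, A₂ be normal abelian subgroups of a finite group G carrying G-invariant non-degenerate bimultiplicative forms b₁, b₂ with values in kˣ, and let B = [A₁,A₂]. Define B^⊥_{b_i} = {y ∈ A_i : b_i(y,x)=1 for all x ∈ B}. Then [B^⊥_{b₁}, A₂] = 1 and [A₁, B^⊥_{b₂}] = 1. -/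
/-!
Take `y ∈ A₁` orthogonal to `B = ⁅A₁, A₂⁆` and `a ∈ A₂`. For `z ∈ A₁`, invariance of `b₁` gives
`b₁ (a y a⁻¹) z = b₁ y (a⁻¹ z a)`, and `a⁻¹ z a = z ⁅z⁻¹, a⁻¹⁆` with `⁅z⁻¹, a⁻¹⁆ ∈ B`, so this equals
`b₁ y z`. Non-degeneracy then forces `a y a⁻¹ = y`. The second claim is the same argument with the
roles of `A₁` and `A₂` exchanged.
-/

open scoped commutatorElement

section Pairing

variable {G M : Type*} [Group G] [Group M] {A : Subgroup G} {b : G → G → M}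

theorem pairing_inv_left (hmul : ∀ x ∈ A, ∀ y ∈ A, ∀ z ∈ A, b (x * y) z = b x z * b y z)
    {x z : G} (hx : x ∈ A) (hz : z ∈ A) : b x⁻¹ z = (b x z)⁻¹ := by
  have hone : b 1 z = 1 := by
    simpa using hmul 1 A.one_mem 1 A.one_mem z hz
  have h := hmul x hx x⁻¹ (A.inv_mem hx) z hz
  rw [mul_inv_cancel, hone] at h
  exact eq_inv_of_mul_eq_one_right h.symm

theorem eq_of_pairing_left_eq (hmul : ∀ x ∈ A, ∀ y ∈ A, ∀ z ∈ A, b (x * y) z = b x z * b y z)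
    (hnd : ∀ x ∈ A, (∀ y ∈ A, b x y = 1) → x = 1) {x x' : G} (hx : x ∈ A) (hx' : x' ∈ A)
    (h : ∀ z ∈ A, b x z = b x' z) : x = x' := by
  refine mul_inv_eq_one.mp (hnd _ (A.mul_mem hx (A.inv_mem hx')) fun z hz => ?_)
  rw [hmul x hx _ (A.inv_mem hx') z hz, pairing_inv_left hmul hx' hz, h z hz, mul_inv_cancel]

theorem pairing_conj_left_eq_of_perp_commutator (hA : A.Normal) (H : Subgroup G)
    (hmul : ∀ x ∈ A, ∀ y ∈ A, ∀ z ∈ A, b z (x * y) = b z x * b z y)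
    (hconj : ∀ g : G, ∀ x ∈ A, ∀ y ∈ A, b (g * x * g⁻¹) (g * y * g⁻¹) = b x y)
    {y : G} (hy : y ∈ A) (hperp : ∀ x ∈ ⁅A, H⁆, b y x = 1) {a : G} (ha : a ∈ H)
    {z : G} (hz : z ∈ A) : b (a * y * a⁻¹) z = b y z := by
  have hc : ⁅z⁻¹, a⁻¹⁆ ∈ ⁅A, H⁆ :=
    Subgroup.commutator_mem_commutator (A.inv_mem hz) (H.inv_mem ha)
  have hcA : ⁅z⁻¹, a⁻¹⁆ ∈ A := Subgroup.commutator_le_left A H hc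
  calc b (a * y * a⁻¹) z = b (a * y * a⁻¹) (a * (a⁻¹ * z * a) * a⁻¹) := by group
    _ = b y (a⁻¹ * z * a) := hconj a y hy _ (by simpa using hA.conj_mem z hz a⁻¹)
    _ = b y (z * ⁅z⁻¹, a⁻¹⁆) := by rw [commutatorElement_def]; group
    _ = b y z := by rw [hmul z hz _ hcA y hy, hperp _ hc, mul_one]

theorem commute_of_perp_commutator (hA : A.Normal) (H : Subgroup G)
    (hmul : ∀ x ∈ A, ∀ y ∈ A, ∀ z ∈ A,
      b (x * y) z = b x z * b y z ∧ b z (x * y) = b z x * b z y)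
    (hnd : ∀ x ∈ A, (∀ y ∈ A, b x y = 1) → x = 1)
    (hconj : ∀ g : G, ∀ x ∈ A, ∀ y ∈ A, b (g * x * g⁻¹) (g * y * g⁻¹) = b x y)
    {y : G} (hy : y ∈ A) (hperp : ∀ x ∈ ⁅A, H⁆, b y x = 1) {a : G} (ha : a ∈ H) :
    y * a = a * y := by
  have hfix : a * y * a⁻¹ = y :=
    eq_of_pairing_left_eq (fun u hu v hv w hw => (hmul u hu v hv w hw).1) hnd
      (hA.conj_mem y hy a) hy fun z hz =>
        pairing_conj_left_eq_of_perp_commutator hA H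
          (fun u hu v hv w hw => (hmul u hu v hv w hw).2) hconj hy hperp ha hz
  exact (mul_inv_eq_iff_eq_mul.mp hfix).symm

end Pairing

theorem perp_commutes_general {G : Type*} [Group G]
    {k : Type*} [Field k]
    (A₁ A₂ : Subgroup G) (h1 : A₁.Normal) (h2 : A₂.Normal)
    (b₁ b₂ : G → G → kˣ)
    (hbm1 : ∀ x ∈ A₁, ∀ y ∈ A₁, ∀ z ∈ A₁,
      b₁ (x * y) z = b₁ x z * b₁ y z ∧ b₁ z (x * y) = b₁ z x * b₁ z y)
    (hbm2 : ∀ x ∈ A₂, ∀ y ∈ A₂, ∀ z ∈ A₂,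
      b₂ (x * y) z = b₂ x z * b₂ y z ∧ b₂ z (x * y) = b₂ z x * b₂ z y)
    (hnd1 : ∀ x ∈ A₁, (∀ y ∈ A₁, b₁ x y = 1) → x = 1)
    (hnd2 : ∀ x ∈ A₂, (∀ y ∈ A₂, b₂ x y = 1) → x = 1)
    (hinv1 : ∀ g : G, ∀ x ∈ A₁, ∀ y ∈ A₁, b₁ (g * x * g⁻¹) (g * y * g⁻¹) = b₁ x y)
    (hinv2 : ∀ g : G, ∀ x ∈ A₂, ∀ y ∈ A₂, b₂ (g * x * g⁻¹) (g * y * g⁻¹) = b₂ x y) :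
    (∀ y ∈ A₁, (∀ x ∈ ⁅A₁, A₂⁆, b₁ y x = 1) → ∀ a ∈ A₂, y * a = a * y) ∧
    (∀ y ∈ A₂, (∀ x ∈ ⁅A₁, A₂⁆, b₂ y x = 1) → ∀ a ∈ A₁, y * a = a * y) := by
  refine ⟨fun y hy hperp a ha => commute_of_perp_commutator h1 A₂ hbm1 hnd1 hinv1 hy hperp ha,
    fun y hy hperp a ha => ?_⟩
  rw [Subgroup.commutator_comm] at hperp
  exact commute_of_perp_commutator h2 A₁ hbm2 hnd2 hinv2 hy hperp ha

theorem perp_commutes {G : Type*} [Group G] [Finite G]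
    {k : Type*} [Field k] [IsAlgClosed k] [CharZero k]
    (A₁ A₂ : Subgroup G) (h1 : A₁.Normal) (h2 : A₂.Normal)
    (hc1 : ∀ a ∈ A₁, ∀ b ∈ A₁, a * b = b * a)
    (hc2 : ∀ a ∈ A₂, ∀ b ∈ A₂, a * b = b * a)
    (b₁ b₂ : G → G → kˣ)
    (hbm1 : ∀ x ∈ A₁, ∀ y ∈ A₁, ∀ z ∈ A₁,
      b₁ (x * y) z = b₁ x z * b₁ y z ∧ b₁ z (x * y) = b₁ z x * b₁ z y)
    (hbm2 : ∀ x ∈ A₂, ∀ y ∈ A₂, ∀ z ∈ A₂,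
      b₂ (x * y) z = b₂ x z * b₂ y z ∧ b₂ z (x * y) = b₂ z x * b₂ z y)
    (hnd1 : ∀ x ∈ A₁, (∀ y ∈ A₁, b₁ x y = 1) → x = 1)
    (hnd2 : ∀ x ∈ A₂, (∀ y ∈ A₂, b₂ x y = 1) → x = 1)
    (hinv1 : ∀ g : G, ∀ x ∈ A₁, ∀ y ∈ A₁, b₁ (g * x * g⁻¹) (g * y * g⁻¹) = b₁ x y)
    (hinv2 : ∀ g : G, ∀ x ∈ A₂, ∀ y ∈ A₂, b₂ (g * x * g⁻¹) (g * y * g⁻¹) = b₂ x y)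
    (hB : ⁅A₁, A₂⁆ ≤ A₁ ⊓ A₂) :
    (∀ y ∈ A₁, (∀ x ∈ ⁅A₁, A₂⁆, b₁ y x = 1) → ∀ a ∈ A₂, y * a = a * y) ∧
    (∀ y ∈ A₂, (∀ x ∈ ⁅A₁, A₂⁆, b₂ y x = 1) → ∀ a ∈ A₁, y * a = a * y) :=
  perp_commutes_general A₁ A₂ h1 h2 b₁ b₂ hbm1 hbm2 hnd1 hnd2 hinv1 hinv2
end
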